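/- arXiv:2202.13520 — 2 statements merged into one kernel-verified Lean document; each statement's English description precedes it below -/
import Mathlib

section
/- In the all-defended setting, let π be the mirror (emulate-the-current-machine) sophisticated AM strategy defined by π r r = 1 and π r m = 0 for m ≠ r. Then for every malware strategy ρ, u_M(π, ρ) = ∑_r e r·ρ r·(1 − ρ r) ≤ 1/4, with equality when ρ r = 1/2 for all r. Hence attacking with probability 1/2 everywhere is a best response of the malware to the mirror strategy. -/
open Finset

lemma sum_mirror_mul {M : Type*} [Fintype M] [DecidableEq M] {π : M → M → ℝ}
    (hπ : ∀ r m, π r m = if m = r then 1 else 0) (ρ : M → ℝ) (r : M) :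
    ∑ m, π r m * ρ m = ρ r := by
  simp [hπ]

lemma mul_one_sub_le_one_div_four (x : ℝ) : x * (1 - x) ≤ 1 / 4 := by
  nlinarith [sq_nonneg (x - 1 / 2)]

lemma sum_mul_le_of_le {ι : Type*} [Fintype ι] {e f : ι → ℝ} {c : ℝ} (he : ∀ i, 0 ≤ e i)
    (hesum : ∑ i, e i = 1) (hf : ∀ i, f i ≤ c) : ∑ i, e i * f i ≤ c :=
  calc ∑ i, e i * f i ≤ ∑ i, e i * c :=
        sum_le_sum fun i _ => mul_le_mul_of_nonneg_left (hf i) (he i)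
    _ = c := by rw [← sum_mul, hesum, one_mul]

theorem stmt_4_general {M : Type*} [Fintype M] [DecidableEq M]
    (e : M → ℝ) (he : ∀ r, 0 ≤ e r) (hesum : ∑ r, e r = 1)
    (π : M → M → ℝ) (hπ : ∀ r m, π r m = if m = r then 1 else 0) :
    (∀ ρ : M → ℝ, (∀ m, 0 ≤ ρ m ∧ ρ m ≤ 1) →
        (∑ r, e r * ρ r * (1 - ∑ m, π r m * ρ m)) = ∑ r, e r * ρ r * (1 - ρ r) ∧
        (∑ r, e r * ρ r * (1 - ∑ m, π r m * ρ m)) ≤ 1/4) ∧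
    (∑ r, e r * (1/2 : ℝ) * (1 - ∑ m, π r m * (1/2 : ℝ))) = 1/4 ∧
    (∀ ρ : M → ℝ, (∀ m, 0 ≤ ρ m ∧ ρ m ≤ 1) →
        (∑ r, e r * ρ r * (1 - ∑ m, π r m * ρ m)) ≤
          ∑ r, e r * (1/2 : ℝ) * (1 - ∑ m, π r m * (1/2 : ℝ))) := by
  have hutility (ρ : M → ℝ) :
      ∑ r, e r * ρ r * (1 - ∑ m, π r m * ρ m) = ∑ r, e r * ρ r * (1 - ρ r) := by
    simp only [sum_mirror_mul hπ]
  have hbound (ρ : M → ℝ) : ∑ r, e r * ρ r * (1 - ρ r) ≤ 1 / 4 := by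
    simp only [mul_assoc]
    exact sum_mul_le_of_le he hesum fun r => mul_one_sub_le_one_div_four (ρ r)
  have hhalf : ∑ r, e r * (1/2 : ℝ) * (1 - ∑ m, π r m * (1/2 : ℝ)) = 1 / 4 := by
    rw [hutility, ← sum_mul, ← sum_mul, hesum]
    norm_num
  refine ⟨fun ρ _ => ⟨hutility ρ, (hutility ρ).trans_le (hbound ρ)⟩, hhalf, fun ρ _ => ?_⟩
  rw [hhalf, hutility]
  exact hbound ρ

/-- In the all-defended setting, let `π` be the mirror
(emulate-the-current-machine) sophisticated AM strategy, `π r r = 1` and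
`π r m = 0` for `m ≠ r`.  Then for every malware strategy `ρ`,
`u_M(π, ρ) = ∑ r, e r * ρ r * (1 - ρ r) ≤ 1/4`, with equality when `ρ ≡ 1/2`.
Hence `ρ ≡ 1/2` is a best response of the malware to the mirror strategy. -/
theorem stmt_4 {M : Type*} [Fintype M] [Nonempty M] [DecidableEq M]
    (e : M → ℝ) (he : ∀ r, 0 ≤ e r) (hesum : ∑ r, e r = 1)
    (π : M → M → ℝ) (hπ : ∀ r m, π r m = if m = r then 1 else 0) :
    (∀ ρ : M → ℝ, (∀ m, 0 ≤ ρ m ∧ ρ m ≤ 1) →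
        (∑ r, e r * ρ r * (1 - ∑ m, π r m * ρ m)) = ∑ r, e r * ρ r * (1 - ρ r) ∧
        (∑ r, e r * ρ r * (1 - ∑ m, π r m * ρ m)) ≤ 1/4) ∧
    (∑ r, e r * (1/2 : ℝ) * (1 - ∑ m, π r m * (1/2 : ℝ))) = 1/4 ∧
    (∀ ρ : M → ℝ, (∀ m, 0 ≤ ρ m ∧ ρ m ≤ 1) →
        (∑ r, e r * ρ r * (1 - ∑ m, π r m * ρ m)) ≤
          ∑ r, e r * (1/2 : ℝ) * (1 - ∑ m, π r m * (1/2 : ℝ))) :=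
  stmt_4_general e he hesum π hπ
end

section
/- (Theorem 2) In the all-defended setting with a sophisticated AM: for every sophisticated AM strategy π and every malware strategy ρ' that maximizes u_M(π, ·) over all malware strategies, the AM utility satisfies u_AM(π, ρ') ≤ 3/4. Moreover, for the mirror strategy π with π r r = 1 and π r m = 0 for m ≠ r, the malware strategy ρ m = 1/2 for all m maximizes u_M(π, ·), and u_AM(π, ρ) = 3/4. Hence emulating the machine being defended is an AM-optimal strategy in equilibrium, guaranteeing AM utility exactly 3/4. -/
/-!
Playing `ρ ≡ 1/2` earns the malware at least `1/2 · (1 - 1/2) = 1/4` against any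
substochastic `π`, so a best response earns at least as much. Against the mirror strategy
the utility collapses to `∑ r, e r * ρ r * (1 - ρ r) ≤ 1/4`, with equality at `ρ ≡ 1/2`.
-/

open Finset

noncomputable section

def malwareUtility {M : Type*} [Fintype M] (e : M → ℝ) (π : M → M → ℝ) (ρ : M → ℝ) : ℝ :=
  ∑ r, e r * ρ r * (1 - ∑ m, π r m * ρ m)

variable {M : Type*} [Fintype M] {e : M → ℝ} {π : M → M → ℝ}

lemma mul_malwareUtility_const_le (he : ∀ r, 0 ≤ e r)
    (hπ : ∀ r, ∑ m, π r m ≤ 1) {c : ℝ} (hc : 0 ≤ c) :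
    c * (1 - c) * ∑ r, e r ≤ malwareUtility e π (fun _ => c) := by
  rw [mul_sum]
  refine sum_le_sum fun r _ => ?_
  have hrow : ∑ m, π r m * c ≤ c := by
    rw [← sum_mul]
    exact mul_le_of_le_one_left hc (hπ r)
  calc c * (1 - c) * e r = e r * c * (1 - c) := by ring
    _ ≤ e r * c * (1 - ∑ m, π r m * c) :=
      mul_le_mul_of_nonneg_left (by linarith) (mul_nonneg (he r) hc)

lemma malwareUtility_of_mirror [DecidableEq M] (hπ : ∀ r m, π r m = if m = r then 1 else 0)
    (ρ : M → ℝ) : malwareUtility e π ρ = ∑ r, e r * ρ r * (1 - ρ r) := by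
  simp [malwareUtility, hπ]

lemma malwareUtility_of_mirror_le [DecidableEq M] (he : ∀ r, 0 ≤ e r)
    (hπ : ∀ r m, π r m = if m = r then 1 else 0) (ρ : M → ℝ) :
    malwareUtility e π ρ ≤ 1 / 4 * ∑ r, e r := by
  rw [malwareUtility_of_mirror hπ, mul_sum]
  refine sum_le_sum fun r _ => ?_
  nlinarith [mul_nonneg (he r) (sq_nonneg (ρ r - 1 / 2))]

end

theorem stmt_5_general {M : Type*} [Fintype M] [DecidableEq M]
    (e : M → ℝ) (he : ∀ r, 0 ≤ e r) (hesum : ∑ r, e r = 1) :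
    (∀ π : M → M → ℝ, (∀ r m, 0 ≤ π r m) → (∀ r, ∑ m, π r m ≤ 1) →
      ∀ ρ' : M → ℝ, (∀ m, 0 ≤ ρ' m ∧ ρ' m ≤ 1) →
        (∀ ρ : M → ℝ, (∀ m, 0 ≤ ρ m ∧ ρ m ≤ 1) →
          (∑ r, e r * ρ r * (1 - ∑ m, π r m * ρ m)) ≤
            ∑ r, e r * ρ' r * (1 - ∑ m, π r m * ρ' m)) →
        1 - (∑ r, e r * ρ' r * (1 - ∑ m, π r m * ρ' m)) ≤ 3/4) ∧
    (∀ π : M → M → ℝ, (∀ r m, π r m = if m = r then 1 else 0) →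
      (∀ ρ : M → ℝ, (∀ m, 0 ≤ ρ m ∧ ρ m ≤ 1) →
        (∑ r, e r * ρ r * (1 - ∑ m, π r m * ρ m)) ≤
          ∑ r, e r * (1/2 : ℝ) * (1 - ∑ m, π r m * (1/2 : ℝ))) ∧
      1 - (∑ r, e r * (1/2 : ℝ) * (1 - ∑ m, π r m * (1/2 : ℝ))) = 3/4) := by
  refine ⟨fun π _ hπ1 ρ' _ hbest => ?_, fun π hπ => ?_⟩
  · have hhalf := mul_malwareUtility_const_le he hπ1 (c := 1 / 2) (by norm_num)
    have hbest_half := hbest (fun _ => 1 / 2) (fun _ => by norm_num)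
    rw [hesum] at hhalf
    unfold malwareUtility at hhalf
    linarith
  · have hhalf : malwareUtility e π (fun _ => 1 / 2) = 1 / 4 := by
      rw [malwareUtility_of_mirror hπ]
      norm_num [← sum_mul, hesum]
    refine ⟨fun ρ _ => ?_, ?_⟩
    · have hρ := malwareUtility_of_mirror_le he hπ ρ
      rw [hesum] at hρ
      unfold malwareUtility at hρ hhalf
      linarith
    · unfold malwareUtility at hhalf
      linarith

/-- Theorem 2: In the all-defended setting with a sophisticated AM,
where `u_M(π,ρ) = ∑ r, e r * ρ r * (1 - ∑ m, π r m * ρ m)` and `u_AM = 1 - u_M`: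
for every sophisticated AM strategy `π` and every malware best response `ρ'` to
`π`, `u_AM(π, ρ') ≤ 3/4`; moreover for the mirror strategy
(`π r r = 1`, `π r m = 0` for `m ≠ r`), the strategy `ρ ≡ 1/2` is a malware
best response and `u_AM(π, ρ) = 3/4`.  Hence emulating the machine being
defended is AM-optimal in equilibrium, guaranteeing AM utility exactly `3/4`. -/
theorem stmt_5 {M : Type*} [Fintype M] [Nonempty M] [DecidableEq M]
    (e : M → ℝ) (he : ∀ r, 0 ≤ e r) (hesum : ∑ r, e r = 1) :
    (∀ π : M → M → ℝ, (∀ r m, 0 ≤ π r m) → (∀ r, ∑ m, π r m ≤ 1) →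
      ∀ ρ' : M → ℝ, (∀ m, 0 ≤ ρ' m ∧ ρ' m ≤ 1) →
        (∀ ρ : M → ℝ, (∀ m, 0 ≤ ρ m ∧ ρ m ≤ 1) →
          (∑ r, e r * ρ r * (1 - ∑ m, π r m * ρ m)) ≤
            ∑ r, e r * ρ' r * (1 - ∑ m, π r m * ρ' m)) →
        1 - (∑ r, e r * ρ' r * (1 - ∑ m, π r m * ρ' m)) ≤ 3/4) ∧
    (∀ π : M → M → ℝ, (∀ r m, π r m = if m = r then 1 else 0) →
      (∀ ρ : M → ℝ, (∀ m, 0 ≤ ρ m ∧ ρ m ≤ 1) →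
        (∑ r, e r * ρ r * (1 - ∑ m, π r m * ρ m)) ≤
          ∑ r, e r * (1/2 : ℝ) * (1 - ∑ m, π r m * (1/2 : ℝ))) ∧
      1 - (∑ r, e r * (1/2 : ℝ) * (1 - ∑ m, π r m * (1/2 : ℝ))) = 3/4) :=
  stmt_5_general e he hesum
end
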